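/- For every real n > 2, the function h_n satisfies h_n(1) = 0, h_n′(1) = 0, h_n″(1) = 0, and h_n‴(1) < 0. -/

import Mathlib

/-- `h_n(b) = n(1−b)(1−b^(n−2)) + (n−2)(1 + b^(n−2) − 2b^(n−1))·ln b`. -/
noncomputable def pwH (n b : ℝ) : ℝ :=
  n * (1 - b) * (1 - b ^ (n - 2)) +
    (n - 2) * (1 + b ^ (n - 2) - 2 * b ^ (n - 1)) * Real.log b

/-! On `x > 0`, `h_n` is a sum of four terms `x ^ a * (p + q * log x)`, with exponents
`a = 0, 1, n - 2, n - 1`, and this family is closed under differentiation: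
`(x ^ a * (p + q * log x))' = x ^ (a - 1) * ((p * a + q) + q * a * log x)`.
Hence every derivative of `h_n` at `1` is the sum of the coefficients `p` of the differentiated
terms; for the first four this gives `0, 0, 0, -3 (n - 2)²`. -/

open Real Set

structure PowLogTerm where
  coeff : ℝ
  logCoeff : ℝ
  exponent : ℝ

namespace PowLogTerm

noncomputable def eval (c : PowLogTerm) (x : ℝ) : ℝ :=
  x ^ c.exponent * (c.coeff + c.logCoeff * log x)

def derivative (c : PowLogTerm) : PowLogTerm :=
  ⟨c.coeff * c.exponent + c.logCoeff, c.logCoeff * c.exponent, c.exponent - 1⟩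

@[simp]
theorem eval_one (c : PowLogTerm) : c.eval 1 = c.coeff := by
  simp [eval]

theorem hasDerivAt_eval (c : PowLogTerm) {x : ℝ} (hx : 0 < x) :
    HasDerivAt c.eval (c.derivative.eval x) x := by
  refine ((hasDerivAt_rpow_const (Or.inl hx.ne')).mul
    (((hasDerivAt_log hx.ne').const_mul c.logCoeff).const_add c.coeff)).congr_deriv ?_
  simp only [eval, derivative]
  rw [rpow_sub_one hx.ne']
  field_simp
  ring

theorem eqOn_deriv_sum_eval {ι : Type*} [Fintype ι] {f : ℝ → ℝ} {c : ι → PowLogTerm}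
    (hf : EqOn f (fun x ↦ ∑ i, (c i).eval x) (Ioi 0)) :
    EqOn (deriv f) (fun x ↦ ∑ i, (c i).derivative.eval x) (Ioi 0) := by
  intro x hx
  rw [(hf.eventuallyEq_of_mem (isOpen_Ioi.mem_nhds hx)).deriv_eq]
  exact (HasDerivAt.fun_sum fun i _ ↦ (c i).hasDerivAt_eval hx).deriv

end PowLogTerm

open PowLogTerm

noncomputable def pwHTerms (n : ℝ) : Fin 4 → PowLogTerm :=
  ![⟨n, n - 2, 0⟩, ⟨-n, 0, 1⟩, ⟨-n, n - 2, n - 2⟩, ⟨n, -2 * (n - 2), n - 1⟩]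

theorem eqOn_pwH_sum_eval (n : ℝ) :
    EqOn (pwH n) (fun x ↦ ∑ i, (pwHTerms n i).eval x) (Ioi 0) := by
  intro x hx
  simp only [pwH, pwHTerms, Fin.sum_univ_four, eval, Matrix.cons_val, rpow_zero, rpow_one]
  rw [show n - 1 = (n - 2) + 1 by ring, rpow_add_one hx.ne']
  ring

/-- For every real `n > 2`: `h_n(1) = 0`, `h_n′(1) = 0`, `h_n″(1) = 0` and `h_n‴(1) < 0`. -/
theorem pairwise_h_derivs_at_one (n : ℝ) (hn : 2 < n) :
    pwH n 1 = 0 ∧ deriv (pwH n) 1 = 0 ∧ deriv (deriv (pwH n)) 1 = 0 ∧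
      deriv (deriv (deriv (pwH n))) 1 < 0 := by
  have h0 := eqOn_pwH_sum_eval n
  have h1 := eqOn_deriv_sum_eval h0
  have h2 := eqOn_deriv_sum_eval h1
  have h3 := eqOn_deriv_sum_eval h2
  have one_mem : (1 : ℝ) ∈ Ioi 0 := mem_Ioi.2 zero_lt_one
  rw [h0 one_mem, h1 one_mem, h2 one_mem, h3 one_mem]
  simp only [eval_one, Fin.sum_univ_four, pwHTerms, derivative, Matrix.cons_val]
  refine ⟨by ring, by ring, by ring, ?_⟩
  calc _ = -3 * (n - 2) ^ 2 := by ring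
    _ < 0 := mul_neg_of_neg_of_pos (by norm_num) (pow_pos (sub_pos.2 hn) 2)
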